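/- Let Q be a constant N×M real matrix. Let X : ℝ² → (N×N real matrices) be infinitely differentiable with X(x,y) invertible for all (x,y), and Y : ℝ² → (M×N real matrices) infinitely differentiable, satisfying X_x = Q·Y, X_y = X_xx and Y_y = Y_xx. Then φ := Y·X⁻¹ satisfies the Burgers equation with product Q: φ_y = φ_xx + 2 φ_x Q φ. -/

import Mathlib

attribute [local instance] Matrix.normedAddCommGroup Matrix.normedSpace

/-- Partial derivative in the `x`-direction of a function of two real variables. -/
noncomputable def pdx {E : Type*} [NormedAddCommGroup E] [NormedSpace ℝ E]
    (f : ℝ × ℝ → E) : ℝ × ℝ → E :=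
  fun p => fderiv ℝ f p (1, 0)

/-- Partial derivative in the `y`-direction of a function of two real variables. -/
noncomputable def pdy {E : Type*} [NormedAddCommGroup E] [NormedSpace ℝ E]
    (f : ℝ × ℝ → E) : ℝ × ℝ → E :=
  fun p => fderiv ℝ f p (0, 1)

/-!
Since `φ X = Y`, differentiating once in `y` and twice in `x` gives
`φ_y X + φ X_y = Y_y` and `φ_xx X + 2 φ_x X_x + φ X_xx = Y_xx`. The heat equations for `X` and `Y`
make the difference `(φ_y - φ_xx) X - 2 φ_x X_x` vanish, and `X_x = Q Y = Q φ X`, so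
`(φ_y - φ_xx - 2 φ_x Q φ) X = 0`; invertibility of `X` finishes. Smoothness of `φ = Y X⁻¹`,
needed for the differentiations, comes from Cramer's rule `X⁻¹ = (det X)⁻¹ • adj X`.
-/

section MatrixSmoothness

variable {𝕜 : Type*} [NontriviallyNormedField 𝕜] {n : Type*} [Fintype n] [DecidableEq n]
  {E : Type*} [NormedAddCommGroup E] [NormedSpace 𝕜 E] {k : WithTop ℕ∞} {f : E → Matrix n n 𝕜}

open Matrix

theorem ContDiff.matrix_det (hf : ContDiff 𝕜 k f) : ContDiff 𝕜 k fun x => (f x).det := by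
  simp only [det_apply]
  refine ContDiff.sum fun σ _ => (contDiff_prod fun i _ => ?_).const_smul _
  exact contDiff_pi.1 (contDiff_pi.1 hf (σ i)) i

theorem ContDiff.matrix_adjugate (hf : ContDiff 𝕜 k f) :
    ContDiff 𝕜 k fun x => (f x).adjugate := by
  refine contDiff_pi.2 fun i => contDiff_pi.2 fun j => ?_
  simp only [adjugate_apply]
  refine ContDiff.matrix_det (contDiff_pi.2 fun a => contDiff_pi.2 fun b => ?_)
  simp only [updateRow_apply]
  split_ifs
  · exact contDiff_const
  · exact contDiff_pi.1 (contDiff_pi.1 hf a) b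

theorem ContDiff.matrix_inv [CompleteSpace 𝕜] (hf : ContDiff 𝕜 k f) (hinv : ∀ x, IsUnit (f x)) :
    ContDiff 𝕜 k fun x => (f x)⁻¹ := by
  simp only [inv_def, Ring.inverse_eq_inv']
  refine (hf.matrix_det.inv fun x => ?_).smul hf.matrix_adjugate
  exact ((isUnit_iff_isUnit_det _).mp (hinv x)).ne_zero

end MatrixSmoothness

section MatrixProduct

variable {𝕜 : Type*} [NontriviallyNormedField 𝕜] [CompleteSpace 𝕜]
  {l m n : Type*} [Fintype l] [Fintype m] [Fintype n]
  {E : Type*} [NormedAddCommGroup E] [NormedSpace 𝕜 E]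
  {f : E → Matrix l m 𝕜} {g : E → Matrix m n 𝕜}

noncomputable def Matrix.mulCLM : Matrix l m 𝕜 →L[𝕜] Matrix m n 𝕜 →L[𝕜] Matrix l n 𝕜 :=
  LinearMap.toContinuousLinearMap
    (LinearMap.toContinuousLinearMap.toLinearMap ∘ₗ mulLinearMap 𝕜)

theorem ContDiff.matrix_mul {k : WithTop ℕ∞} (hf : ContDiff 𝕜 k f) (hg : ContDiff 𝕜 k g) :
    ContDiff 𝕜 k fun x => f x * g x := by
  exact Matrix.mulCLM.isBoundedBilinearMap.contDiff.comp (hf.prodMk hg)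

theorem fderiv_matrix_mul_apply {x : E} (hf : DifferentiableAt 𝕜 f x)
    (hg : DifferentiableAt 𝕜 g x) (v : E) :
    fderiv 𝕜 (fun y => f y * g y) x v = fderiv 𝕜 f x v * g x + f x * fderiv 𝕜 g x v := by
  have h : HasFDerivAt (fun y => f y * g y) _ x :=
    Matrix.mulCLM.hasFDerivAt_of_bilinear hf.hasFDerivAt hg.hasFDerivAt
  rw [h.fderiv]
  exact add_comm _ _

end MatrixProduct

section PartialDerivatives

theorem ContDiff.pdx {E : Type*} [NormedAddCommGroup E] [NormedSpace ℝ E] {k : WithTop ℕ∞}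
    {f : ℝ × ℝ → E} (hf : ContDiff ℝ (k + 1) f) : ContDiff ℝ k (pdx f) :=
  (hf.fderiv_right le_rfl).clm_apply contDiff_const

variable {l m n : Type*} [Fintype l] [Fintype m] [Fintype n]
  {f : ℝ × ℝ → Matrix l m ℝ} {g : ℝ × ℝ → Matrix m n ℝ}

theorem pdx_matrix_mul (hf : Differentiable ℝ f) (hg : Differentiable ℝ g) :
    pdx (fun q => f q * g q) = fun q => pdx f q * g q + f q * pdx g q :=
  funext fun q => fderiv_matrix_mul_apply (hf q) (hg q) _

theorem pdy_matrix_mul (hf : Differentiable ℝ f) (hg : Differentiable ℝ g) :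
    pdy (fun q => f q * g q) = fun q => pdy f q * g q + f q * pdy g q :=
  funext fun q => fderiv_matrix_mul_apply (hf q) (hg q) _

theorem pdx_pdx_matrix_mul (hf : ContDiff ℝ 2 f) (hg : ContDiff ℝ 2 g) (p : ℝ × ℝ) :
    pdx (pdx fun q => f q * g q) p =
      pdx (pdx f) p * g p + 2 • (pdx f p * pdx g p) + f p * pdx (pdx g) p := by
  have hf₁ : ContDiff ℝ 1 f := hf.of_le one_le_two
  have hg₁ : ContDiff ℝ 1 g := hg.of_le one_le_two
  have hf' : ContDiff ℝ 1 (pdx f) := hf.pdx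
  have hg' : ContDiff ℝ 1 (pdx g) := hg.pdx
  rw [pdx_matrix_mul (hf₁.differentiable one_ne_zero) (hg₁.differentiable one_ne_zero)]
  have hsum : pdx (fun q => pdx f q * g q + f q * pdx g q) p =
      pdx (fun q => pdx f q * g q) p + pdx (fun q => f q * pdx g q) p :=
    congrArg (· (1, 0)) (fderiv_fun_add ((hf'.matrix_mul hg₁).differentiable one_ne_zero p)
      ((hf₁.matrix_mul hg').differentiable one_ne_zero p))
  rw [hsum, pdx_matrix_mul (hf'.differentiable one_ne_zero) (hg₁.differentiable one_ne_zero),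
    pdx_matrix_mul (hf₁.differentiable one_ne_zero) (hg'.differentiable one_ne_zero), two_smul]
  simp only [add_assoc]

end PartialDerivatives

/-- `R = 0` specialization of the Riccati construction: if `X_x = Q Y` and
`X`, `Y` solve the heat equation, then `φ = Y X⁻¹` solves the Burgers equation
with product `Q`: `φ_y = φ_xx + 2 φ_x Q φ`. -/
theorem burgers_of_riccati (M N : ℕ)
    (Q : Matrix (Fin N) (Fin M) ℝ)
    (X : ℝ × ℝ → Matrix (Fin N) (Fin N) ℝ)
    (Y : ℝ × ℝ → Matrix (Fin M) (Fin N) ℝ)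
    (hX : ContDiff ℝ (⊤ : ℕ∞) X) (hY : ContDiff ℝ (⊤ : ℕ∞) Y)
    (hXinv : ∀ p, IsUnit (X p))
    (hX1 : ∀ p, pdx X p = Q * Y p)
    (hX2 : ∀ p, pdy X p = pdx (pdx X) p)
    (hY2 : ∀ p, pdy Y p = pdx (pdx Y) p)
    (φ : ℝ × ℝ → Matrix (Fin M) (Fin N) ℝ)
    (hφ : ∀ p, φ p = Y p * (X p)⁻¹) :
    ∀ p, pdy φ p = pdx (pdx φ) p + 2 • (pdx φ p * Q * φ p) := by
  intro p
  have hX₂ : ContDiff ℝ 2 X := hX.of_le (by norm_cast)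
  have hφ₂ : ContDiff ℝ 2 φ := by
    rw [funext hφ]
    exact (hY.matrix_mul (hX.matrix_inv hXinv)).of_le (by norm_cast)
  have hdet q : IsUnit (X q).det := (Matrix.isUnit_iff_isUnit_det _).mp (hXinv q)
  have hφX : (fun q => φ q * X q) = Y :=
    funext fun q => by rw [hφ, Matrix.nonsing_inv_mul_cancel_right _ _ (hdet q)]
  have hy : pdy φ p * X p + φ p * pdy X p = pdy Y p := by
    rw [← hφX, pdy_matrix_mul (hφ₂.differentiable two_ne_zero) (hX₂.differentiable two_ne_zero)]
  have hxx : pdx (pdx φ) p * X p + 2 • (pdx φ p * pdx X p) + φ p * pdx (pdx X) p =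
      pdx (pdx Y) p := by
    rw [← hφX, pdx_pdx_matrix_mul hφ₂ hX₂]
  have hmulX : pdy φ p * X p = (pdx (pdx φ) p + 2 • (pdx φ p * Q * φ p)) * X p := by
    rw [hX2, hY2, ← hxx, add_left_inj] at hy
    rw [hy, hX1, ← congrFun hφX p, Matrix.add_mul, Matrix.smul_mul, Matrix.mul_assoc,
      Matrix.mul_assoc]
  rw [← Matrix.mul_nonsing_inv_cancel_right _ (pdy φ p) (hdet p), hmulX,
    Matrix.mul_nonsing_inv_cancel_right _ _ (hdet p)]
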